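/- arXiv:0907.5594 — 2 statements merged into one kernel-verified Lean document; each statement's English description precedes it below -/
import Mathlib

section
/- Let R be a commutative local ring with 1/2 and maximal ideal J. Let a, b ∈ GL_n(R) be involutions with a ≡ b mod J (entrywise). If V = V₀ ⊕ V₁ is the eigendecomposition of V = R^n with respect to a and V = V₀′ ⊕ V₁′ that with respect to b, then the ranks of V₀ and V₀′ coincide, as do those of V₁ and V₁′. -/
/-!
The matrix `d = 1 + a b` satisfies `d b = a d`, hence conjugates `b ∓ 1` into `a ∓ 1` and maps
the eigenspaces of `b` isomorphically onto those of `a`. Modulo the maximal ideal, `d` becomes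
`1 + b² = 2`, which is invertible, so `d` is invertible over the local ring.
-/

open IsLocalRing

theorem Module.End.rank_ker_eq_of_semiconjBy {R M : Type*} [Ring R] [AddCommGroup M] [Module R M]
    {p f g : Module.End R M} (hp : IsUnit p) (h : SemiconjBy p f g) :
    Module.rank R (LinearMap.ker f) = Module.rank R (LinearMap.ker g) := by
  have hbij := (Module.End.isUnit_iff p).1 hp
  have hker : LinearMap.ker f = (LinearMap.ker g).comap p := by
    rw [← LinearMap.ker_comp, ← Module.End.mul_eq_comp, ← h.eq, Module.End.mul_eq_comp,
      LinearMap.ker_comp_of_ker_eq_bot _ (LinearMap.ker_eq_bot.2 hbij.1)]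
  rw [← rank_map_eq hbij.1, hker, Submodule.map_comap_eq_of_surjective hbij.2]

theorem Matrix.rank_ker_toLin'_eq_of_semiconjBy {R ι : Type*} [CommRing R] [Fintype ι]
    [DecidableEq ι] {p m₁ m₂ : Matrix ι ι R} (hp : IsUnit p) (h : SemiconjBy p m₁ m₂) :
    Module.rank R (LinearMap.ker (Matrix.toLin' m₁)) =
      Module.rank R (LinearMap.ker (Matrix.toLin' m₂)) :=
  Module.End.rank_ker_eq_of_semiconjBy (hp.map Matrix.toLinAlgEquiv') (h.map Matrix.toLinAlgEquiv')

theorem Matrix.isUnit_of_isUnit_mapMatrix {R S ι : Type*} [CommRing R] [CommRing S] [Fintype ι]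
    [DecidableEq ι] (f : R →+* S) [IsLocalHom f] {M : Matrix ι ι R}
    (h : IsUnit (f.mapMatrix M)) : IsUnit M := by
  rw [Matrix.isUnit_iff_isUnit_det] at h ⊢
  rwa [← RingHom.map_det, isUnit_map_iff] at h

theorem semiconjBy_one_add_mul_of_mul_self_eq_one {A : Type*} [Ring A] {a b : A}
    (ha : a * a = 1) (hb : b * b = 1) : SemiconjBy (1 + a * b) b a := by
  rw [SemiconjBy, add_mul, one_mul, mul_assoc, hb, mul_one, mul_add, mul_one, ← mul_assoc, ha,
    one_mul, add_comm]

/-- Two involutions of `GL_n(R)` over a local ring with 1/2 that are congruent modulo the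
maximal ideal have eigendecompositions with equal ranks of the corresponding summands. -/
theorem stmt5 (R : Type*) [CommRing R] [IsLocalRing R] [Invertible (2 : R)] (n : ℕ)
    (a b : Matrix (Fin n) (Fin n) R) (ha : a * a = 1) (hb : b * b = 1)
    (hab : ∀ i j, a i j - b i j ∈ IsLocalRing.maximalIdeal R) :
    Module.rank R (LinearMap.ker (Matrix.toLin' (a - 1))) =
        Module.rank R (LinearMap.ker (Matrix.toLin' (b - 1))) ∧
      Module.rank R (LinearMap.ker (Matrix.toLin' (a + 1))) =
        Module.rank R (LinearMap.ker (Matrix.toLin' (b + 1))) := by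
  have hres : (residue R).mapMatrix a = (residue R).mapMatrix b := by
    ext i j
    rw [RingHom.mapMatrix_apply, RingHom.mapMatrix_apply, Matrix.map_apply, Matrix.map_apply,
      ← sub_eq_zero, ← map_sub, residue_eq_zero_iff]
    exact hab i j
  have hunit : IsUnit (1 + a * b) := by
    refine Matrix.isUnit_of_isUnit_mapMatrix (residue R) ?_
    rw [map_add, map_one, map_mul, hres, ← map_mul, hb, map_one, one_add_one_eq_two]
    simpa only [map_ofNat] using
      (isUnit_of_invertible (2 : R)).map ((residue R).mapMatrix.comp (Matrix.scalar (Fin n)))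
  have hconj := semiconjBy_one_add_mul_of_mul_self_eq_one ha hb
  exact ⟨(Matrix.rank_ker_toLin'_eq_of_semiconjBy hunit (hconj.sub_right (.one_right _))).symm,
    (Matrix.rank_ker_toLin'_eq_of_semiconjBy hunit (hconj.add_right (.one_right _))).symm⟩
end

section
/- Let S be a commutative ring, n ≥ 1, and G ⊆ GL_n(S) a subgroup that generates M_n(S) as a ring. If C ∈ GL_n(S) and S' ⊆ S is a subring such that C G C⁻¹ generates M_n(S') as a ring, then S' = S. -/
/-- For a subring `S'` of `S`, the subring `M_n(S') ⊆ M_n(S)` of matrices all of whose entries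
lie in `S'`. -/
def matrixSubring (S : Type*) [CommRing S] (n : ℕ) (S' : Subring S) :
    Subring (Matrix (Fin n) (Fin n) S) where
  carrier := {A | ∀ i j, A i j ∈ S'}
  zero_mem' := by intro i j; simpa using S'.zero_mem
  one_mem' := by
    intro i j
    rw [Matrix.one_apply]
    by_cases h : i = j
    · rw [if_pos h]; exact S'.one_mem
    · rw [if_neg h]; exact S'.zero_mem
  add_mem' := by
    intro a b ha hb i j
    exact S'.add_mem (ha i j) (hb i j)
  neg_mem' := by
    intro a ha i j
    exact S'.neg_mem (ha i j)
  mul_mem' := by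
    intro a b ha hb i j
    rw [Matrix.mul_apply]
    exact Subring.sum_mem _ fun k _ => S'.mul_mem (ha i k) (hb k j)

theorem Subring.closure_image_units_conj_eq_top {R : Type*} [Ring R] (C : Rˣ) {s : Set Rˣ}
    (hs : closure (Units.val '' s) = ⊤) :
    closure ((fun g : Rˣ ↦ ((C * g * C⁻¹ : Rˣ) : R)) '' s) = ⊤ := by
  let conj := MulSemiringAction.toRingEquiv (ConjAct Rˣ) R (ConjAct.toConjAct C)
  have h_image :
      (fun g : Rˣ ↦ ((C * g * C⁻¹ : Rˣ) : R)) '' s = (conj : R →+* R) '' (Units.val '' s) := by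
    rw [Set.image_image]
    exact Set.image_congr fun g _ ↦ (ConjAct.units_smul_def _ _).symm
  rw [h_image, ← RingHom.map_closure (conj : R →+* R), hs, ← RingHom.range_eq_map]
  exact RingHom.range_eq_top_of_surjective _ conj.surjective

theorem matrixSubring_eq_top_iff {S : Type*} [CommRing S] {n : ℕ} (hn : 0 < n)
    (S' : Subring S) : matrixSubring S n S' = ⊤ ↔ S' = ⊤ := by
  refine ⟨fun h ↦ eq_top_iff.2 fun s _ ↦ ?_, fun h ↦ eq_top_iff.2 fun A _ i j ↦ h ▸ trivial⟩
  have hconst : Matrix.of (fun _ _ ↦ s) ∈ matrixSubring S n S' := h ▸ Subring.mem_top _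
  exact hconst ⟨0, hn⟩ ⟨0, hn⟩

/-- If a subgroup `G ≤ GL_n(S)` generates `M_n(S)` as a ring, `C ∈ GL_n(S)`, and the conjugate
`C G C⁻¹` generates `M_n(S')` as a ring for a subring `S' ⊆ S`, then `S' = S`. -/
theorem stmt14 (S : Type*) [CommRing S] (n : ℕ) (hn : 1 ≤ n)
    (G : Subgroup (Matrix (Fin n) (Fin n) S)ˣ)
    (hG : Subring.closure
        ((fun g : (Matrix (Fin n) (Fin n) S)ˣ => (g : Matrix (Fin n) (Fin n) S)) '' G) = ⊤)
    (C : (Matrix (Fin n) (Fin n) S)ˣ) (S' : Subring S)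
    (hconj : Subring.closure
        ((fun g : (Matrix (Fin n) (Fin n) S)ˣ =>
          ((C * g * C⁻¹ : (Matrix (Fin n) (Fin n) S)ˣ) : Matrix (Fin n) (Fin n) S)) '' G) =
        matrixSubring S n S') :
    S' = ⊤ := by
  rw [Subring.closure_image_units_conj_eq_top C hG] at hconj
  exact (matrixSubring_eq_top_iff hn S').1 hconj.symm
end
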